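/- arXiv:2202.04245 — 5 statements merged into one kernel-verified Lean document; each statement's English description precedes it below -/
import Mathlib

section
/- Let F be twice differentiable on [0,U) with density f and survival S, and suppose w(v) = v - S(v)/f(v) is strictly increasing. Then for every ε with 0 ≤ ε < U, the function r_ε(v) = v - ε - S(v)/f(v-ε) is strictly increasing on its domain (ε, U). -/
/-!
Write `m = S / f`, so `w t = t - m t`, and let `u = v - ε`. The derivative of `r_ε` at `v` is
`1 + f v / f u + S v f'(u) / f u ^ 2`, and its positivity follows from three consequences of the
monotonicity of `w`: `w u < w v` bounds `f v` from below; `t ↦ S t (m u + t - u)` has derivative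
`S t - f t (m u + t - u) < 0` on `(u, v)`, which bounds `S v / S u` from above; and `w' u ≥ 0`,
i.e. `m' u ≤ 1`, bounds `f' u` from below.
-/

open Set

lemma sq_add_mul_add_mul_pos {a b A B d ε : ℝ} (ha : 0 < a) (hA : 0 < A) (hB : 0 < B)
    (hε : 0 ≤ ε) (h_lower : B * a < b * (A + ε * a)) (h_upper : B * (A + ε * a) < A ^ 2)
    (h_deriv : 0 ≤ 2 * a ^ 2 + A * d) :
    0 < a ^ 2 + a * b + B * d := by
  set E := A + ε * a
  -- with `R = B / A` and `q = A / E`, `hcoef` reads `1 - 2R + Rq = (1 - q)^2 + (q - R)(2 - q) > 0`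
  have hAE : A ≤ E := by nlinarith
  have hcoef : 0 < A * E + A * B - 2 * B * E := by
    have hsum : E * (A * E + A * B - 2 * B * E) =
        A * (E - A) ^ 2 + (A ^ 2 - B * E) * (2 * E - A) := by ring
    have : 0 < E * (A * E + A * B - 2 * B * E) := by
      rw [hsum]
      nlinarith [sq_nonneg (E - A), mul_pos (sub_pos.2 h_upper) (by linarith : 0 < 2 * E - A)]
    exact pos_of_mul_pos_right this (by linarith)
  have hscaled : a ^ 2 * (A * E + A * B - 2 * B * E) < A * E * (a ^ 2 + a * b + B * d) := by
    nlinarith [mul_lt_mul_of_pos_left h_lower (mul_pos hA ha),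
      mul_le_mul_of_nonneg_left h_deriv (mul_nonneg hB.le (by linarith : 0 ≤ E))]
  have hprod : 0 < A * E * (a ^ 2 + a * b + B * d) := by
    nlinarith [mul_pos (pow_pos ha 2) hcoef]
  exact pos_of_mul_pos_right hprod (by positivity)

section Regularity

variable {f S : ℝ → ℝ} {u v : ℝ}

lemma two_mul_sq_add_mul_deriv_nonneg {d : ℝ} (hS : HasDerivAt S (-f u) u)
    (hf : HasDerivAt f d u) (hfu : 0 < f u)
    (hw : MonotoneOn (fun t => t - S t / f t) (Icc u v)) (huv : u < v) :
    0 ≤ 2 * f u ^ 2 + S u * d := by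
  have hwu : HasDerivAt (fun t => t - S t / f t) (1 - (-f u * f u - S u * d) / f u ^ 2) u :=
    (hasDerivAt_id u).sub (hS.div hf hfu.ne')
  have hacc : AccPt u (Filter.principal (Icc u v)) :=
    uniqueDiffWithinAt_iff_accPt.1 (uniqueDiffOn_Icc huv u (left_mem_Icc.2 huv.le))
  have hnonneg := hwu.hasDerivWithinAt.nonneg_of_monotoneOn hacc hw
  rw [sub_nonneg, div_le_one (by positivity)] at hnonneg
  linarith

lemma survival_mul_lt_density_mul (hfu : 0 < f u) (hfv : 0 < f v)
    (hw : u - S u / f u < v - S v / f v) :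
    S v * f u < f v * (S u + (v - u) * f u) := by
  have hw' : S v / f v < S u / f u + (v - u) := by linarith
  rw [div_lt_iff₀ hfv] at hw'
  calc S v * f u < (S u / f u + (v - u)) * f v * f u := mul_lt_mul_of_pos_right hw' hfu
    _ = f v * (S u + (v - u) * f u) := by field_simp

lemma survival_mul_lt_sq (hS : ∀ t ∈ Icc u v, HasDerivAt S (-f t) t)
    (hf : ∀ t ∈ Icc u v, 0 < f t) (hw : StrictMonoOn (fun t => t - S t / f t) (Icc u v))
    (huv : u < v) :
    S v * (S u + (v - u) * f u) < S u ^ 2 := by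
  set φ : ℝ → ℝ := fun t => S t * (S u / f u + (t - u))
  have hφ : ∀ t ∈ Icc u v, HasDerivAt φ (-f t * (S u / f u + (t - u)) + S t * 1) t :=
    fun t ht => (hS t ht).mul (((hasDerivAt_id t).sub_const u).const_add _)
  have hφ_anti : StrictAntiOn φ (Icc u v) := by
    refine strictAntiOn_of_hasDerivWithinAt_neg (convex_Icc u v)
      (fun t ht => (hφ t ht).continuousAt.continuousWithinAt)
      (fun t ht => (hφ t (interior_subset ht)).hasDerivWithinAt) fun t ht => ?_
    rw [interior_Icc] at ht
    have hwt := hw (left_mem_Icc.2 huv.le) (Ioo_subset_Icc_self ht) ht.1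
    have hft := hf t (Ioo_subset_Icc_self ht)
    have : S t < f t * (S u / f u + (t - u)) := by
      rw [← div_lt_iff₀' hft]
      linarith
    linarith
  have hφ_lt := hφ_anti (left_mem_Icc.2 huv.le) (right_mem_Icc.2 huv.le) huv
  have hfu := hf u (left_mem_Icc.2 huv.le)
  simp only [φ, sub_self, add_zero] at hφ_lt
  calc S v * (S u + (v - u) * f u) = S v * (S u / f u + (v - u)) * f u := by field_simp
    _ < S u * (S u / f u) * f u := mul_lt_mul_of_pos_right hφ_lt hfu
    _ = S u ^ 2 := by field_simp

lemma sq_add_density_mul_add_survival_mul_deriv_pos {d : ℝ}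
    (hS : ∀ t ∈ Icc u v, HasDerivAt S (-f t) t) (hfd : HasDerivAt f d u)
    (hf : ∀ t ∈ Icc u v, 0 < f t) (hSu : 0 < S u) (hSv : 0 < S v)
    (hw : StrictMonoOn (fun t => t - S t / f t) (Icc u v)) (huv : u < v) :
    0 < f u ^ 2 + f u * f v + S v * d := by
  have hu := left_mem_Icc.2 huv.le
  have hv := right_mem_Icc.2 huv.le
  exact sq_add_mul_add_mul_pos (hf u hu) hSu hSv (sub_nonneg.2 huv.le)
    (survival_mul_lt_density_mul (hf u hu) (hf v hv) (hw hu hv huv))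
    (survival_mul_lt_sq hS hf hw huv)
    (two_mul_sq_add_mul_deriv_nonneg (hS u hu) hfd (hf u hu) hw.monotoneOn huv)

end Regularity

lemma hasDerivAt_sub_sub_div_comp_sub {f S : ℝ → ℝ} {v ε d : ℝ} (hS : HasDerivAt S (-f v) v)
    (hf : HasDerivAt f d (v - ε)) (hf0 : f (v - ε) ≠ 0) :
    HasDerivAt (fun t => t - ε - S t / f (t - ε))
      ((f (v - ε) ^ 2 + f (v - ε) * f v + S v * d) / f (v - ε) ^ 2) v := by
  have hshift : HasDerivAt (fun t => t - ε) 1 v := (hasDerivAt_id v).sub_const ε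
  have hfshift : HasDerivAt (fun t => f (t - ε)) (d * 1) v := hf.comp v hshift
  refine (hshift.sub (hS.div hfshift hf0)).congr_deriv ?_
  field_simp
  ring

theorem r_eps_strict_mono_general
    (U : ℝ)
    (f f' S : ℝ → ℝ)
    (hSderiv : ∀ v ∈ Ico 0 U, HasDerivAt S (-(f v)) v)
    (hfderiv : ∀ v ∈ Ico 0 U, HasDerivAt f (f' v) v)
    (hfpos : ∀ v ∈ Ico 0 U, 0 < f v)
    (hSpos : ∀ v ∈ Ico 0 U, 0 < S v)
    (hw : StrictMonoOn (fun v => v - S v / f v) (Ico 0 U))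
    (ε : ℝ) (hε0 : 0 ≤ ε) :
    StrictMonoOn (fun v => v - ε - S v / f (v - ε)) (Ioo ε U) := by
  rcases hε0.eq_or_lt with rfl | hε
  · intro x hx y hy hxy
    simpa using hw ⟨hx.1.le, hx.2⟩ ⟨hy.1.le, hy.2⟩ hxy
  have hIcc : ∀ v ∈ Ioo ε U, Icc (v - ε) v ⊆ Ico 0 U := fun v hv t ht =>
    ⟨by linarith [ht.1, hv.1], by linarith [ht.2, hv.2]⟩
  have hmem : ∀ v ∈ Ioo ε U, v - ε ∈ Ico 0 U ∧ v ∈ Ico 0 U := fun v hv =>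
    ⟨hIcc v hv (left_mem_Icc.2 (by linarith)), hIcc v hv (right_mem_Icc.2 (by linarith))⟩
  have hr : ∀ v ∈ Ioo ε U, HasDerivAt (fun v => v - ε - S v / f (v - ε))
      ((f (v - ε) ^ 2 + f (v - ε) * f v + S v * f' (v - ε)) / f (v - ε) ^ 2) v := fun v hv =>
    hasDerivAt_sub_sub_div_comp_sub (hSderiv v (hmem v hv).2) (hfderiv _ (hmem v hv).1)
      (hfpos _ (hmem v hv).1).ne'
  refine strictMonoOn_of_hasDerivWithinAt_pos (convex_Ioo ε U)
    (fun v hv => (hr v hv).continuousAt.continuousWithinAt)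
    (fun v hv => (hr v (interior_subset hv)).hasDerivWithinAt) fun v hv => ?_
  rw [interior_Ioo] at hv
  obtain ⟨hu, hv'⟩ := hmem v hv
  have hsub := hIcc v hv
  exact div_pos (sq_add_density_mul_add_survival_mul_deriv_pos (fun t ht => hSderiv t (hsub ht))
      (hfderiv _ hu) (fun t ht => hfpos t (hsub ht)) (hSpos _ hu) (hSpos _ hv') (hw.mono hsub)
      (by linarith)) (pow_pos (hfpos _ hu) 2)

/-- If `F` is twice differentiable on `[0, U)` with density `f > 0`,
survival `S`, and `w v = v - S v / f v` strictly increasing, then for every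
`ε` with `0 ≤ ε < U`, the function `r_ε v = v - ε - S v / f (v - ε)` is
strictly increasing on `(ε, U)`. -/
theorem r_eps_strict_mono
    (U : ℝ) (hU : 0 < U)
    (f f' S : ℝ → ℝ)
    (hSderiv : ∀ v ∈ Ico 0 U, HasDerivAt S (-(f v)) v)
    (hfderiv : ∀ v ∈ Ico 0 U, HasDerivAt f (f' v) v)
    (hfpos : ∀ v ∈ Ico 0 U, 0 < f v)
    (hSpos : ∀ v ∈ Ico 0 U, 0 < S v)
    (hw : StrictMonoOn (fun v => v - S v / f v) (Ico 0 U))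
    (ε : ℝ) (hε0 : 0 ≤ ε) (hεU : ε < U) :
    StrictMonoOn (fun v => v - ε - S v / f (v - ε)) (Ioo ε U) :=
  r_eps_strict_mono_general U f f' S hSderiv hfderiv hfpos hSpos hw ε hε0
end

section
/- Let F be twice differentiable on [0,U) with density f, survival S, hazard h = f/S, and suppose w(v) = v - 1/h(v) is strictly increasing. Then for any ε > 0 and any v with v - ε ≥ 0 in the support: ∫_{v-ε}^{v} h(t) dt > ln(1 + h(v-ε)·ε). -/
/-! Regularity says `t - 1/h t` exceeds `a - 1/h a` for `t > a`, i.e. `h t > 1 / (t - a + 1/h a)`.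
Integrating this bound over `[a, a + ε]` gives exactly `log (1 + h a * ε)`, with strict inequality
by continuity since the bound is strict at `t = a + ε`. -/

open Set intervalIntegral

theorem integral_inv_sub_add_eq_log {a b c : ℝ} (hab : a ≤ b) (hc : 0 < c) :
    ∫ t in a..b, (t - a + c)⁻¹ = Real.log (1 + (b - a) / c) := by
  have hshift := integral_comp_add_right (a := a) (b := b) (fun x : ℝ => x⁻¹) (c - a)
  simp only [add_sub_cancel] at hshift
  simp_rw [show ∀ t : ℝ, t - a + c = t + (c - a) from fun t => by ring]
  rw [hshift, integral_inv_of_pos hc (by linarith)]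
  congr 1
  field_simp
  ring

theorem inv_sub_add_inv_lt_of_strictMonoOn {g : ℝ → ℝ} {s : Set ℝ}
    (hg : ∀ t ∈ s, 0 < g t) (hw : StrictMonoOn (fun t => t - 1 / g t) s)
    {a t : ℝ} (ha : a ∈ s) (ht : t ∈ s) (hat : a < t) :
    (t - a + (g a)⁻¹)⁻¹ < g t := by
  have hwat : a - 1 / g a < t - 1 / g t := hw ha ht hat
  have hga := hg a ha
  have hgt := hg t ht
  rw [one_div, one_div] at hwat
  rw [inv_lt_comm₀ (by positivity) hgt]
  linarith

theorem log_one_add_mul_lt_integral {g : ℝ → ℝ} {a b : ℝ} (hab : a < b)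
    (hg : ∀ t ∈ Icc a b, 0 < g t) (hcont : ContinuousOn g (Icc a b))
    (hw : StrictMonoOn (fun t => t - 1 / g t) (Icc a b)) :
    Real.log (1 + g a * (b - a)) < ∫ t in a..b, g t := by
  have ha : a ∈ Icc a b := left_mem_Icc.2 hab.le
  have hga := hg a ha
  have hbound : ContinuousOn (fun t => (t - a + (g a)⁻¹)⁻¹) (Icc a b) :=
    ((continuousOn_id.sub continuousOn_const).add continuousOn_const).inv₀ fun t ht => by
      have := ht.1
      dsimp
      positivity
  calc Real.log (1 + g a * (b - a))
      = ∫ t in a..b, (t - a + (g a)⁻¹)⁻¹ := by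
        rw [integral_inv_sub_add_eq_log hab.le (inv_pos.2 hga), div_inv_eq_mul, mul_comm]
    _ < ∫ t in a..b, g t :=
        integral_lt_integral_of_continuousOn_of_le_of_exists_lt hab hbound hcont
          (fun t ht => (inv_sub_add_inv_lt_of_strictMonoOn hg hw ha (Ioc_subset_Icc_self ht)
            ht.1).le)
          ⟨b, right_mem_Icc.2 hab.le, inv_sub_add_inv_lt_of_strictMonoOn hg hw ha
            (right_mem_Icc.2 hab.le) hab⟩

theorem hazard_integral_gt_log_general
    (U : ℝ)
    (f S h : ℝ → ℝ)
    (hfpos : ∀ v ∈ Ico 0 U, 0 < f v)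
    (hSpos : ∀ v ∈ Ico 0 U, 0 < S v)
    (hh : ∀ v, h v = f v / S v)
    (hcont : ContinuousOn h (Ico 0 U))
    (hw : StrictMonoOn (fun v => v - 1 / h v) (Ico 0 U))
    (ε v : ℝ) (hε : 0 < ε) (hve : 0 ≤ v - ε) (hvU : v < U) :
    ∫ t in (v - ε)..v, h t > Real.log (1 + h (v - ε) * ε) := by
  have hsub : Icc (v - ε) v ⊆ Ico 0 U := fun t ht => ⟨hve.trans ht.1, ht.2.trans_lt hvU⟩
  have hpos : ∀ t ∈ Icc (v - ε) v, 0 < h t := fun t ht => by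
    rw [hh]
    exact div_pos (hfpos t (hsub ht)) (hSpos t (hsub ht))
  have := log_one_add_mul_lt_integral (by linarith) hpos (hcont.mono hsub) (hw.mono hsub)
  rwa [sub_sub_cancel] at this

/-- If `F` is twice differentiable on `[0, U)` with density `f`, survival `S`,
hazard `h = f/S`, and `w v = v - 1/h v` strictly increasing, then for any
`ε > 0` and any `v` with `v - ε ≥ 0` in the support:
`∫_{v-ε}^{v} h(t) dt > ln(1 + h(v-ε)·ε)`. -/
theorem hazard_integral_gt_log
    (U : ℝ) (hU : 0 < U)
    (f f' S h : ℝ → ℝ)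
    (hSderiv : ∀ v ∈ Ico 0 U, HasDerivAt S (-(f v)) v)
    (hfderiv : ∀ v ∈ Ico 0 U, HasDerivAt f (f' v) v)
    (hfpos : ∀ v ∈ Ico 0 U, 0 < f v)
    (hSpos : ∀ v ∈ Ico 0 U, 0 < S v)
    (hh : ∀ v, h v = f v / S v)
    (hcont : ContinuousOn h (Ico 0 U))
    (hw : StrictMonoOn (fun v => v - 1 / h v) (Ico 0 U))
    (ε v : ℝ) (hε : 0 < ε) (hve : 0 ≤ v - ε) (hvU : v < U) :
    ∫ t in (v - ε)..v, h t > Real.log (1 + h (v - ε) * ε) :=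
  hazard_integral_gt_log_general U f S h hfpos hSpos hh hcont hw ε v hε hve hvU
end

section
/- Let F be twice differentiable on [0,U) with density f, survival S, hazard h = f/S, and suppose w(v) = v - 1/h(v) is strictly increasing. Then for every γ ≥ 1, the function z_γ(v) = v - γ·S(γv)/f(v) is strictly increasing in v (on the region where γv < U). -/
open Set Topology

/-!
Write `W v = v - S v / f v`. Since `W' = (2 f² + S f') / f²`, monotonicity of `W` gives
`2 f² + S f' ≥ 0`, which is exactly `(f / S²)' ≥ 0`: `1 / S` is convex.
With `q = S (γ v) / S v`, the derivative of `z_γ` splits as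
`z_γ' = γ q W' + (1 - γ q)² + γ² (f (γ v) / f v - q²)`,
and the last term is nonnegative because `f / S²` is nondecreasing and `v ≤ γ v`. For `x < y`,
`q ≥ c := S (γ y) / S x` on `[x, y]` because `S` decreases, so `z_γ - γ c W` is monotone on
`[x, y]`, and `z_γ y - z_γ x ≥ γ c (W y - W x) > 0`.
-/

lemma HasDerivAt.nonneg_of_monotoneOn_of_mem_nhds {g : ℝ → ℝ} {g' x : ℝ} {s : Set ℝ}
    (hs : s ∈ 𝓝 x) (hd : HasDerivAt g g' x) (hg : MonotoneOn g s) : 0 ≤ g' := by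
  refine hd.hasDerivWithinAt.nonneg_of_monotoneOn ?_ hg
  rw [accPt_principal_iff_nhdsWithin, sdiff_eq,
    nhdsWithin_inter_of_mem (mem_nhdsWithin_of_mem_nhds hs)]
  infer_instance

lemma monotoneOn_of_hasDerivAt_nonneg {D : Set ℝ} (hD : Convex ℝ D) {g g' : ℝ → ℝ}
    (hd : ∀ x ∈ D, HasDerivAt g (g' x) x) (hg' : ∀ x ∈ interior D, 0 ≤ g' x) :
    MonotoneOn g D :=
  monotoneOn_of_hasDerivWithinAt_nonneg hD
    (fun x hx => (hd x hx).continuousAt.continuousWithinAt)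
    (fun x hx => (hd x (interior_subset hx)).hasDerivWithinAt) hg'

lemma antitoneOn_of_hasDerivAt_nonpos {D : Set ℝ} (hD : Convex ℝ D) {g g' : ℝ → ℝ}
    (hd : ∀ x ∈ D, HasDerivAt g (g' x) x) (hg' : ∀ x ∈ interior D, g' x ≤ 0) :
    AntitoneOn g D :=
  antitoneOn_of_hasDerivWithinAt_nonpos hD
    (fun x hx => (hd x hx).continuousAt.continuousWithinAt)
    (fun x hx => (hd x (interior_subset hx)).hasDerivWithinAt) hg'

lemma sub_le_sub_of_hasDerivAt_le {F G F' G' : ℝ → ℝ} {x y : ℝ} (hxy : x ≤ y)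
    (hF : ∀ v ∈ Icc x y, HasDerivAt F (F' v) v) (hG : ∀ v ∈ Icc x y, HasDerivAt G (G' v) v)
    (hle : ∀ v ∈ Ioo x y, G' v ≤ F' v) : G y - G x ≤ F y - F x := by
  have hmono : MonotoneOn (fun v => F v - G v) (Icc x y) :=
    monotoneOn_of_hasDerivAt_nonneg (convex_Icc x y) (fun v hv => (hF v hv).sub (hG v hv))
      (fun v hv => sub_nonneg.2 (hle v (by rwa [interior_Icc] at hv)))
  linarith [hmono (left_mem_Icc.2 hxy) (right_mem_Icc.2 hxy) hxy]

noncomputable def virtualValue (S f : ℝ → ℝ) (v : ℝ) : ℝ := v - S v / f v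

section Survival

variable {f S : ℝ → ℝ} {v a : ℝ}

lemma hasDerivAt_virtualValue (hS : HasDerivAt S (-f v) v) (hf : HasDerivAt f a v)
    (hfv : f v ≠ 0) :
    HasDerivAt (virtualValue S f) ((2 * f v ^ 2 + S v * a) / f v ^ 2) v := by
  refine ((hasDerivAt_id v).sub (hS.div hf hfv)).congr_deriv ?_
  field_simp
  ring

lemma hasDerivAt_density_div_survival_sq (hS : HasDerivAt S (-f v) v) (hf : HasDerivAt f a v)
    (hSv : S v ≠ 0) :
    HasDerivAt (fun t => f t / S t ^ 2) ((2 * f v ^ 2 + S v * a) / S v ^ 3) v := by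
  refine (hf.div (hS.pow 2) (pow_ne_zero 2 hSv)).congr_deriv ?_
  simp only [Pi.pow_apply]
  field_simp
  ring

lemma hasDerivAt_z_gamma {γ : ℝ} (hS : HasDerivAt S (-f (γ * v)) (γ * v))
    (hf : HasDerivAt f a v) (hfv : f v ≠ 0) :
    HasDerivAt (fun t => t - γ * S (γ * t) / f t)
      (1 + γ * (γ * f (γ * v) * f v + S (γ * v) * a) / f v ^ 2) v := by
  have hSγ := hS.comp v ((hasDerivAt_id v).const_mul γ)
  refine ((hasDerivAt_id v).sub ((hSγ.const_mul γ).div hf hfv)).congr_deriv ?_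
  simp only [Function.comp_apply]
  field_simp
  ring

end Survival

section Regular

variable {U : ℝ} {f f' S : ℝ → ℝ}

lemma two_mul_sq_add_mul_deriv_nonneg_of_strictMonoOn
    (hS : ∀ v ∈ Ico 0 U, HasDerivAt S (-f v) v) (hf : ∀ v ∈ Ico 0 U, HasDerivAt f (f' v) v)
    (hfpos : ∀ v ∈ Ico 0 U, 0 < f v)
    (hW : StrictMonoOn (virtualValue S f) (Ico 0 U)) {v : ℝ} (hv : v ∈ Ioo 0 U) :
    0 ≤ 2 * f v ^ 2 + S v * f' v := by
  have hv' : v ∈ Ico 0 U := Ioo_subset_Ico_self hv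
  have hfv := hfpos v hv'
  have hderiv := (hasDerivAt_virtualValue (hS v hv') (hf v hv') hfv.ne')
    |>.nonneg_of_monotoneOn_of_mem_nhds (Filter.mem_of_superset (Ioo_mem_nhds hv.1 hv.2)
      Ioo_subset_Ico_self) hW.monotoneOn
  simpa using (le_div_iff₀ (by positivity)).1 hderiv

lemma monotoneOn_density_div_survival_sq (hS : ∀ v ∈ Ico 0 U, HasDerivAt S (-f v) v)
    (hf : ∀ v ∈ Ico 0 U, HasDerivAt f (f' v) v) (hSpos : ∀ v ∈ Ico 0 U, 0 < S v)
    (hreg : ∀ v ∈ Ioo 0 U, 0 ≤ 2 * f v ^ 2 + S v * f' v) :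
    MonotoneOn (fun t => f t / S t ^ 2) (Ico 0 U) := by
  refine monotoneOn_of_hasDerivAt_nonneg (convex_Ico 0 U)
    (fun v hv => hasDerivAt_density_div_survival_sq (hS v hv) (hf v hv) (hSpos v hv).ne')
    fun v hv => ?_
  rw [interior_Ico] at hv
  have := hSpos v (Ioo_subset_Ico_self hv)
  exact div_nonneg (hreg v hv) (by positivity)

lemma antitoneOn_of_hasDerivAt_neg (hS : ∀ v ∈ Ico 0 U, HasDerivAt S (-f v) v)
    (hfpos : ∀ v ∈ Ico 0 U, 0 < f v) : AntitoneOn S (Ico 0 U) :=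
  antitoneOn_of_hasDerivAt_nonpos (convex_Ico 0 U) hS fun v hv =>
    neg_nonpos.2 (hfpos v (interior_subset hv)).le

end Regular

lemma mul_virtualValue_deriv_le_z_gamma_deriv {γ c a a' b p q : ℝ} (hγ : 0 ≤ γ) (ha : 0 < a)
    (hb : 0 < b) (hq : 0 < q) (hreg : 0 ≤ 2 * a ^ 2 + b * a') (hc : c ≤ q / b)
    (hmono : a / b ^ 2 ≤ p / q ^ 2) :
    γ * c * ((2 * a ^ 2 + b * a') / a ^ 2) ≤ 1 + γ * (γ * p * a + q * a') / a ^ 2 := by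
  have hsq : q ^ 2 / b ^ 2 ≤ p / a := by
    rw [div_le_div_iff₀ (by positivity) (by positivity)] at hmono ⊢
    linarith
  have hgap : 1 + γ * (γ * p * a + q * a') / a ^ 2
      - (γ * (q / b) * ((2 * a ^ 2 + b * a') / a ^ 2) + (1 - γ * q / b) ^ 2)
      = γ ^ 2 * (p / a - q ^ 2 / b ^ 2) := by
    field_simp
    ring
  calc γ * c * ((2 * a ^ 2 + b * a') / a ^ 2)
      ≤ γ * (q / b) * ((2 * a ^ 2 + b * a') / a ^ 2) := by gcongr
    _ ≤ γ * (q / b) * ((2 * a ^ 2 + b * a') / a ^ 2) + (1 - γ * q / b) ^ 2 :=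
      le_add_of_nonneg_right (sq_nonneg _)
    _ ≤ 1 + γ * (γ * p * a + q * a') / a ^ 2 := by
      linarith [mul_nonneg (sq_nonneg γ) (sub_nonneg.2 hsq)]

theorem z_gamma_strict_mono_general
    (U : ℝ)
    (f f' S h : ℝ → ℝ)
    (hSderiv : ∀ v ∈ Ico 0 U, HasDerivAt S (-(f v)) v)
    (hfderiv : ∀ v ∈ Ico 0 U, HasDerivAt f (f' v) v)
    (hfpos : ∀ v ∈ Ico 0 U, 0 < f v)
    (hSpos : ∀ v ∈ Ico 0 U, 0 < S v)
    (hh : ∀ v, h v = f v / S v)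
    (hw : StrictMonoOn (fun v => v - 1 / h v) (Ico 0 U))
    (γ : ℝ) (hγ : 1 ≤ γ) :
    StrictMonoOn (fun v => v - γ * S (γ * v) / f v) {v | 0 ≤ v ∧ γ * v < U} := by
  have hγ0 : 0 < γ := one_pos.trans_le hγ
  have hW : StrictMonoOn (virtualValue S f) (Ico 0 U) := by
    convert hw using 1
    funext v
    rw [virtualValue, hh, one_div_div]
  have hreg := fun v =>
    two_mul_sq_add_mul_deriv_nonneg_of_strictMonoOn (v := v) hSderiv hfderiv hfpos hW
  have hmono := monotoneOn_density_div_survival_sq hSderiv hfderiv hSpos hreg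
  have hanti := antitoneOn_of_hasDerivAt_neg hSderiv hfpos
  rintro x ⟨hx0, -⟩ y ⟨-, hyU⟩ hxy
  have hmem : ∀ v ∈ Icc x y, v ∈ Ico 0 U ∧ γ * v ∈ Ico 0 U ∧ v ≤ γ * v := by
    rintro v ⟨hxv, hvy⟩
    have hγv : γ * v ≤ γ * y := by gcongr
    have hvγ : v ≤ γ * v := le_mul_of_one_le_left (hx0.trans hxv) hγ
    exact ⟨⟨hx0.trans hxv, by linarith⟩, ⟨mul_nonneg hγ0.le (hx0.trans hxv), by linarith⟩,
      hvγ⟩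
  obtain ⟨hxm, -, -⟩ := hmem x (left_mem_Icc.2 hxy.le)
  obtain ⟨hym, hγym, -⟩ := hmem y (right_mem_Icc.2 hxy.le)
  set c := S (γ * y) / S x
  have hc : 0 < c := div_pos (hSpos _ hγym) (hSpos _ hxm)
  have hcompare := sub_le_sub_of_hasDerivAt_le hxy.le
    (fun v hv => hasDerivAt_z_gamma (γ := γ) (hSderiv _ (hmem v hv).2.1)
      (hfderiv v (hmem v hv).1) (hfpos v (hmem v hv).1).ne')
    (fun v hv => ((hasDerivAt_virtualValue (hSderiv v (hmem v hv).1) (hfderiv v (hmem v hv).1)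
      (hfpos v (hmem v hv).1).ne')).const_mul (γ * c))
    fun v hv => by
      obtain ⟨hvm, hγvm, hvγ⟩ := hmem v (Ioo_subset_Icc_self hv)
      refine mul_virtualValue_deriv_le_z_gamma_deriv hγ0.le (hfpos v hvm) (hSpos v hvm)
        (hSpos _ hγvm) (hreg v ⟨hx0.trans_lt hv.1, hvm.2⟩) ?_ (hmono hvm hγvm hvγ)
      exact div_le_div₀ (hSpos _ hγvm).le (hanti hγvm hγym (by gcongr; exact hv.2.le))
        (hSpos v hvm) (hanti hxm hvm hv.1.le)
  have hgain := mul_lt_mul_of_pos_left (hW hxm hym hxy) (mul_pos hγ0 hc)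
  simp only [virtualValue] at hcompare hgain ⊢
  linarith

/-- If `F` is twice differentiable on `[0, U)` with density `f > 0`,
survival `S`, hazard `h = f/S`, and `w v = v - 1/h v` strictly increasing,
then for every `γ ≥ 1` the function `z_γ v = v - γ·S(γv)/f v` is strictly
increasing on the region `{v | 0 ≤ v ∧ γ·v < U}`. -/
theorem z_gamma_strict_mono
    (U : ℝ) (hU : 0 < U)
    (f f' S h : ℝ → ℝ)
    (hSderiv : ∀ v ∈ Ico 0 U, HasDerivAt S (-(f v)) v)
    (hfderiv : ∀ v ∈ Ico 0 U, HasDerivAt f (f' v) v)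
    (hfpos : ∀ v ∈ Ico 0 U, 0 < f v)
    (hSpos : ∀ v ∈ Ico 0 U, 0 < S v)
    (hh : ∀ v, h v = f v / S v)
    (hw : StrictMonoOn (fun v => v - 1 / h v) (Ico 0 U))
    (γ : ℝ) (hγ : 1 ≤ γ) :
    StrictMonoOn (fun v => v - γ * S (γ * v) / f v) {v | 0 ≤ v ∧ γ * v < U} :=
  z_gamma_strict_mono_general U f f' S h hSderiv hfderiv hfpos hSpos hh hw γ hγ
end

section
/- Let F be a regular distribution on [0,∞) with strictly increasing w(v) = v - 1/h(v) and lim_{v→∞} w(v) > 0. Then for any γ > 1, for all sufficiently large v, γ·S(γv)/S(v) < 1, and consequently z_γ(v) = v - γS(γv)/f(v) > w(v) > 0 for large v. -/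
open Set Filter

/-! Once `w v₀ = c > 0`, monotonicity of `w` gives `S x < f x * (x - c)` for `x > v₀`, which says
exactly that `x ↦ S x * (x - c)` is strictly decreasing there. Comparing its values at `v` and
`γ v`, and using `γ v - c ≥ γ (v - c)`, yields `γ S(γ v) < S v`. -/

theorem strictAntiOn_mul_sub_of_lt_mul_sub {S f : ℝ → ℝ} {a c : ℝ}
    (hS : ∀ x ∈ Ici a, HasDerivAt S (-f x) x) (hlt : ∀ x ∈ Ioi a, S x < f x * (x - c)) :
    StrictAntiOn (fun x => S x * (x - c)) (Ici a) := by
  have hderiv : ∀ x ∈ Ici a, HasDerivAt (fun x => S x * (x - c)) (-f x * (x - c) + S x) x :=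
    fun x hx => ((hS x hx).mul ((hasDerivAt_id' x).sub_const c)).congr_deriv (by ring)
  refine strictAntiOn_of_deriv_neg (convex_Ici a)
    (fun x hx => (hderiv x hx).continuousAt.continuousWithinAt) fun x hx => ?_
  rw [interior_Ici] at hx
  rw [(hderiv x (Ioi_subset_Ici_self hx)).deriv]
  linarith [hlt x hx]

theorem mul_lt_of_strictAntiOn_mul_sub {S : ℝ → ℝ} {a c γ v : ℝ} (hc : 0 < c) (hca : c < a)
    (hanti : StrictAntiOn (fun x => S x * (x - c)) (Ici a)) (hγ : 1 < γ) (hv : a ≤ v)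
    (hSγv : 0 ≤ S (γ * v)) : γ * S (γ * v) < S v := by
  have hvγv : v < γ * v := lt_mul_left (by linarith) hγ
  have hdecr : S (γ * v) * (γ * v - c) < S v * (v - c) :=
    hanti (mem_Ici.mpr hv) (mem_Ici.mpr (hv.trans hvγv.le)) hvγv
  have hvc : 0 < v - c := by linarith
  refine lt_of_mul_lt_mul_right ?_ hvc.le
  calc γ * S (γ * v) * (v - c) ≤ S (γ * v) * (γ * v - c) := by
        nlinarith [mul_nonneg hSγv (mul_nonneg hc.le (sub_nonneg.2 hγ.le))]
    _ < S v * (v - c) := hdecr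

/-- Let `F` be a regular distribution on `[0, ∞)` with `w v = v - 1/h v`
strictly increasing and `lim_{v→∞} w v > 0`. Then for any `γ > 1`, for all
sufficiently large `v`, `γ·S(γv)/S v < 1`, and consequently
`z_γ v = v - γ·S(γv)/f v > w v > 0` for large `v`. -/
theorem z_gamma_eventually_positive
    (f S h : ℝ → ℝ)
    (hSderiv : ∀ v ∈ Ici (0 : ℝ), HasDerivAt S (-(f v)) v)
    (hfpos : ∀ v ∈ Ici (0 : ℝ), 0 < f v)
    (hSpos : ∀ v ∈ Ici (0 : ℝ), 0 < S v)
    (hh : ∀ v, h v = f v / S v)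
    (hw : StrictMonoOn (fun v => v - 1 / h v) (Ici 0))
    (hlim : ∃ L, 0 < L ∧
      (Tendsto (fun v => v - 1 / h v) atTop (nhds L) ∨
        Tendsto (fun v => v - 1 / h v) atTop atTop))
    (γ : ℝ) (hγ : 1 < γ) :
    ∀ᶠ v in atTop,
      γ * S (γ * v) / S v < 1 ∧
      v - γ * S (γ * v) / f v > v - 1 / h v ∧
      v - 1 / h v > 0 := by
  have hwS : ∀ v, v - 1 / h v = v - S v / f v := fun v => by rw [hh, one_div_div]
  have hw0 : ∀ᶠ v in atTop, 0 < v - 1 / h v := by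
    obtain ⟨L, hL, hT | hT⟩ := hlim
    · exact hT.eventually (eventually_gt_nhds hL)
    · exact hT.eventually (eventually_gt_atTop 0)
  obtain ⟨v₀, hwv₀, hv₀⟩ := (hw0.and (eventually_ge_atTop 0)).exists
  set c := v₀ - 1 / h v₀
  have hcv₀ : c < v₀ := by
    show v₀ - 1 / h v₀ < v₀
    rw [hwS]; linarith [div_pos (hSpos v₀ hv₀) (hfpos v₀ hv₀)]
  have hlt : ∀ x ∈ Ioi v₀, S x < f x * (x - c) := fun x hv₀x => by
    have hx : (0 : ℝ) ≤ x := hv₀.trans (le_of_lt hv₀x)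
    have hcx : c < x - S x / f x := hwS x ▸ hw hv₀ hx hv₀x
    rw [mul_comm, ← div_lt_iff₀ (hfpos x hx)]
    linarith
  have hanti := strictAntiOn_mul_sub_of_lt_mul_sub (fun x hx => hSderiv x (hv₀.trans hx)) hlt
  filter_upwards [eventually_ge_atTop v₀, hw0] with v hv hwv
  have hv0 : (0 : ℝ) ≤ v := hv₀.trans hv
  have key : γ * S (γ * v) < S v := mul_lt_of_strictAntiOn_mul_sub hwv₀ hcv₀ hanti hγ hv
    (hSpos _ (mul_nonneg (by linarith) hv0)).le
  refine ⟨(div_lt_one (hSpos v hv0)).mpr key, ?_, hwv⟩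
  rw [hwS]
  linarith [div_lt_div_of_pos_right key (hfpos v hv0)]
end

section
/- Let F be 0-strongly regular on [0,U) with c = 0. Under the ε-difference constraint, if p_l*(ε) satisfies the first-order condition S(p_l*+ε) = p_l* f(p_l*), i.e., exp(-∫_{p_l*}^{p_l*+ε} h(t)dt) = p_l* h(p_l*), then p_l* h(p_l*) < 1/(1 + h(p_l*)·ε). -/
/-!
On `(a, a + ε]` the monotonicity of the virtual value `v - 1/h v` gives
`1/h t < t - a + 1/h a`, so `h` strictly dominates `1/(t - a + 1/h a)`,
whose integral over `[a, a + ε]` is `log (1 + h a · ε)`. Hence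
`exp (-∫ h) < 1/(1 + h a · ε)`, and the first-order condition identifies the
left side with `a · h a`.
-/

open Set intervalIntegral Real

lemma one_div_sub_add_lt_of_sub_lt_sub_one_div {a b x y : ℝ} (hy : 0 < y)
    (hlt : a - b < x - 1 / y) : 1 / (x - a + b) < y :=
  (one_div_lt (by linarith [one_div_pos.mpr hy]) hy).mpr (by linarith)

lemma integral_one_div_sub_add_one_div {H : ℝ} (a ε : ℝ) (hH : 0 < H) (hε : 0 ≤ ε) :
    ∫ t in a..a + ε, 1 / (t - a + 1 / H) = log (1 + H * ε) := by
  have hH' : 0 < 1 / H := one_div_pos.mpr hH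
  calc ∫ t in a..a + ε, 1 / (t - a + 1 / H)
      = ∫ t in a..a + ε, (t + (1 / H - a))⁻¹ := by
        refine integral_congr fun t _ => ?_
        simp only [one_div]; ring_nf
    _ = log ((a + ε + (1 / H - a)) / (a + (1 / H - a))) := by
        rw [integral_comp_add_right (fun x => x⁻¹), integral_inv_of_pos] <;> linarith
    _ = log (1 + H * ε) := by
        congr 1; field_simp; ring

theorem log_one_add_mul_lt_integral_of_strictMonoOn {h : ℝ → ℝ} {a ε : ℝ} (hε : 0 < ε)
    (hc : ContinuousOn h (Icc a (a + ε))) (hpos : ∀ x ∈ Icc a (a + ε), 0 < h x)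
    (hw : StrictMonoOn (fun v => v - 1 / h v) (Icc a (a + ε))) :
    log (1 + h a * ε) < ∫ t in a..a + ε, h t := by
  have hab : a < a + ε := by linarith
  have ha : a ∈ Icc a (a + ε) := left_mem_Icc.mpr hab.le
  have hdom : ∀ x ∈ Ioc a (a + ε), 1 / (x - a + 1 / h a) < h x := fun x hx =>
    one_div_sub_add_lt_of_sub_lt_sub_one_div (hpos x (Ioc_subset_Icc_self hx))
      (hw ha (Ioc_subset_Icc_self hx) hx.1)
  have hden : ∀ x ∈ Icc a (a + ε), x - a + 1 / h a ≠ 0 := fun x hx =>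
    (by linarith [hx.1, one_div_pos.mpr (hpos a ha)] : 0 < x - a + 1 / h a).ne'
  rw [← integral_one_div_sub_add_one_div a ε (hpos a ha) hε.le]
  refine integral_lt_integral_of_continuousOn_of_le_of_exists_lt hab
    (continuousOn_const.div (by fun_prop) hden) hc (fun x hx => (hdom x hx).le)
    ⟨a + ε, right_mem_Icc.mpr hab.le, hdom _ (right_mem_Ioc.mpr hab)⟩

theorem foc_implies_plh_bound_general
    (U : ℝ)
    (f S h : ℝ → ℝ)
    (hfpos : ∀ v ∈ Ico 0 U, 0 < f v)
    (hSpos : ∀ v ∈ Ico 0 U, 0 < S v)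
    (hh : ∀ v, h v = f v / S v)
    (hcont : ContinuousOn h (Ico 0 U))
    (hw : StrictMonoOn (fun v => v - 1 / h v) (Ico 0 U))
    (pl ε : ℝ) (hpl : 0 < pl) (hε : 0 < ε) (hplU : pl + ε < U)
    (hFOC : Real.exp (-∫ t in pl..(pl + ε), h t) = pl * h pl) :
    pl * h pl < 1 / (1 + h pl * ε) := by
  have hsub : Icc pl (pl + ε) ⊆ Ico 0 U := fun x hx => ⟨hpl.le.trans hx.1, hx.2.trans_lt hplU⟩
  have hpos : ∀ x ∈ Icc pl (pl + ε), 0 < h x := fun x hx => by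
    rw [hh]; exact div_pos (hfpos x (hsub hx)) (hSpos x (hsub hx))
  have hlog := log_one_add_mul_lt_integral_of_strictMonoOn hε (hcont.mono hsub) hpos
    (hw.mono hsub)
  have hone_add_pos : 0 < 1 + h pl * ε := by
    have := hpos pl (left_mem_Icc.mpr (by linarith)); positivity
  calc pl * h pl = exp (-∫ t in pl..(pl + ε), h t) := hFOC.symm
    _ < exp (-log (1 + h pl * ε)) := exp_lt_exp.mpr (by linarith)
    _ = 1 / (1 + h pl * ε) := by rw [exp_neg, exp_log hone_add_pos, one_div]

/-- Let `F` be 0-strongly regular on `[0, U)` with `c = 0`. Under the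
`ε`-difference constraint, if `p_l*` satisfies the first-order condition
`exp(-∫_{p_l*}^{p_l*+ε} h(t) dt) = p_l*·h(p_l*)`, then
`p_l*·h(p_l*) < 1/(1 + h(p_l*)·ε)`. -/
theorem foc_implies_plh_bound
    (U : ℝ) (hU : 0 < U)
    (f S h : ℝ → ℝ)
    (hfpos : ∀ v ∈ Ico 0 U, 0 < f v)
    (hSpos : ∀ v ∈ Ico 0 U, 0 < S v)
    (hh : ∀ v, h v = f v / S v)
    (hcont : ContinuousOn h (Ico 0 U))
    (hw : StrictMonoOn (fun v => v - 1 / h v) (Ico 0 U))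
    (pl ε : ℝ) (hpl : 0 < pl) (hε : 0 < ε) (hplU : pl + ε < U)
    (hFOC : Real.exp (-∫ t in pl..(pl + ε), h t) = pl * h pl) :
    pl * h pl < 1 / (1 + h pl * ε) :=
  foc_implies_plh_bound_general U f S h hfpos hSpos hh hcont hw pl ε hpl hε hplU hFOC
end
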